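/- Let n be a positive integer, α, β ∈ (0,1), μ̄ ∈ (0,1), and let A be a finite set together with a probability kernel k assigning to each pair (x^n, y^n) ∈ {0,1}^n × {0,1}^n a probability mass function k(x^n, y^n) on A. Let P̃_{X^n}, P̃_{Y^n} be the truncated distributions obtained by conditioning P_X^{⊗n}, P_Y^{⊗n} (Bernoulli products with parameters α, β) on having at least (1−μ̄)·n·α, respectively (1−μ̄)·n·β, ones. Let μ̃ = P̃_{X^n} ⊗ P̃_{Y^n} and μ = P_X^{⊗n} ⊗ P_Y^{⊗n}, and let μ̃∘k, μ∘k denote the pushforwards of μ̃, μ through the kernel k (i.e. the marginal on A). Then (1/2)·‖ μ̃ ⊗ (μ̃∘k) − μ ⊗ (μ∘k) ‖₁ ≤ 4·exp(−μ̄²·n·α/2) + 4·exp(−μ̄²·n·β/2), where ‖·‖₁ is the ℓ¹ distance on the product space ({0,1}^n × {0,1}^n) × A. -/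

import Mathlib

open Finset

lemma exp_neg_quad (x : ℝ) (hx : 0 ≤ x) : Real.exp (-x) ≤ 1 - x + x ^ 2 / 2 := by
  have h1 : 1 + x + x ^ 2 / 2 ≤ Real.exp x := by
    have h := Real.sum_le_exp_of_nonneg hx 3
    simp [Finset.sum_range_succ] at h
    nlinarith [h]
  have hE : 0 < Real.exp (-x) := Real.exp_pos _
  have hme : Real.exp (-x) * Real.exp x = 1 := by
    rw [← Real.exp_add]; simp
  nlinarith [sq_nonneg x, sq_nonneg (x * x)]

lemma sum_prod_bool (n : ℕ) (g : Bool → ℝ) :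
    ∑ x : Fin n → Bool, ∏ i, g (x i) = (g true + g false) ^ n := by
  have := Finset.prod_univ_sum (fun _ : Fin n => (Finset.univ : Finset Bool))
    (fun _ b => g b)
  rw [Fintype.piFinset_univ] at this
  rw [← this]
  simp [Fintype.sum_bool]

lemma chernoff (n : ℕ) (α μ : ℝ) (hα : 0 < α) (hα1 : α < 1) (hμ : 0 < μ) (hμ1 : μ < 1) :
    ∑ x : Fin n → Bool, (∏ i, (if x i then α else 1 - α)) *
      (if (1 - μ) * n * α ≤ ∑ i, (if x i then (1:ℝ) else 0) then 0 else 1)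
      ≤ Real.exp (-(μ ^ 2 * n * α) / 2) := by
  set c : ℝ := (1 - μ) * n * α with hc
  -- pointwise bound by exponential
  have step1 : ∀ x : Fin n → Bool,
      (∏ i, (if x i then α else 1 - α)) *
        (if c ≤ ∑ i, (if x i then (1:ℝ) else 0) then (0:ℝ) else 1)
      ≤ (∏ i, (if x i then α else 1 - α)) *
        Real.exp (μ * (c - ∑ i, (if x i then (1:ℝ) else 0))) := by
    intro x
    have hP : 0 ≤ ∏ i, (if x i then α else 1 - α) :=
      Finset.prod_nonneg fun i _ => by split <;> linarith
    by_cases h : c ≤ ∑ i, (if x i then (1:ℝ) else 0)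
    · rw [if_pos h, mul_zero]
      positivity
    · rw [if_neg h]
      apply mul_le_mul_of_nonneg_left _ hP
      have hS : ∑ i, (if x i then (1:ℝ) else 0) < c := not_le.mp h
      have : (0:ℝ) ≤ μ * (c - ∑ i, (if x i then (1:ℝ) else 0)) := by nlinarith
      calc (1:ℝ) = Real.exp 0 := by simp
        _ ≤ _ := Real.exp_le_exp.mpr this
  -- sum of exponential bound factorizes
  have step2 : ∑ x : Fin n → Bool, (∏ i, (if x i then α else 1 - α)) *
        Real.exp (μ * (c - ∑ i, (if x i then (1:ℝ) else 0)))
      = Real.exp (μ * c) * (α * Real.exp (-μ) + (1 - α)) ^ n := by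
    have key : ∀ x : Fin n → Bool, (∏ i, (if x i then α else 1 - α)) *
        Real.exp (μ * (c - ∑ i, (if x i then (1:ℝ) else 0)))
        = Real.exp (μ * c) *
          ∏ i, (if x i then α * Real.exp (-μ) else 1 - α) := by
      intro x
      have h1 : μ * (c - ∑ i, (if x i then (1:ℝ) else 0))
          = μ * c + ∑ i, (-μ * (if x i then (1:ℝ) else 0)) := by
        rw [← Finset.mul_sum]; ring
      rw [h1, Real.exp_add, Real.exp_sum, mul_left_comm, ← Finset.prod_mul_distrib]
      congr 1
      apply Finset.prod_congr rfl
      intro i _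
      by_cases h : x i <;> simp [h]
    rw [Finset.sum_congr rfl fun x _ => key x, ← Finset.mul_sum]
    congr 1
    have := sum_prod_bool n (fun b => if b then α * Real.exp (-μ) else 1 - α)
    simpa using this
  -- bound the factorized form
  have hy : 0 ≤ α * Real.exp (-μ) + (1 - α) := by
    have h0 : 0 ≤ α * Real.exp (-μ) := by positivity
    linarith
  have step3 : (α * Real.exp (-μ) + (1 - α)) ^ n
      ≤ Real.exp ((n : ℝ) * (α * (Real.exp (-μ) - 1))) := by
    have h1 : α * Real.exp (-μ) + (1 - α) ≤ Real.exp (α * (Real.exp (-μ) - 1)) := by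
      have := Real.add_one_le_exp (α * (Real.exp (-μ) - 1))
      linarith
    calc (α * Real.exp (-μ) + (1 - α)) ^ n
        ≤ (Real.exp (α * (Real.exp (-μ) - 1))) ^ n := pow_le_pow_left₀ hy h1 n
      _ = Real.exp ((n : ℝ) * (α * (Real.exp (-μ) - 1))) := by
          rw [← Real.exp_nat_mul]
  have step4 : Real.exp (μ * c) * Real.exp ((n : ℝ) * (α * (Real.exp (-μ) - 1)))
      ≤ Real.exp (-(μ ^ 2 * n * α) / 2) := by
    rw [← Real.exp_add, Real.exp_le_exp]
    have hq := exp_neg_quad μ (le_of_lt hμ)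
    have hna : (0:ℝ) ≤ (n : ℝ) * α := by positivity
    rw [hc]
    nlinarith [mul_le_mul_of_nonneg_left hq hna]
  calc ∑ x : Fin n → Bool, (∏ i, (if x i then α else 1 - α)) *
        (if c ≤ ∑ i, (if x i then (1:ℝ) else 0) then (0:ℝ) else 1)
      ≤ ∑ x : Fin n → Bool, (∏ i, (if x i then α else 1 - α)) *
        Real.exp (μ * (c - ∑ i, (if x i then (1:ℝ) else 0))) :=
        Finset.sum_le_sum fun x _ => step1 x
    _ = Real.exp (μ * c) * (α * Real.exp (-μ) + (1 - α)) ^ n := step2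
    _ ≤ Real.exp (μ * c) * Real.exp ((n : ℝ) * (α * (Real.exp (-μ) - 1))) := by
        apply mul_le_mul_of_nonneg_left step3 (le_of_lt (Real.exp_pos _))
    _ ≤ _ := step4


lemma sum_prod_bool' (n : ℕ) (g : Bool → ℝ) :
    ∑ x : Fin n → Bool, ∏ i, g (x i) = (g true + g false) ^ n := by
  have := Finset.prod_univ_sum (fun _ : Fin n => (Finset.univ : Finset Bool))
    (fun _ b => g b)
  rw [Fintype.piFinset_univ] at this
  rw [← this]
  simp [Fintype.sum_bool]

lemma tv_trunc (n : ℕ) (α μ : ℝ) (hα : 0 < α) (hα1 : α < 1) (hμ : 0 < μ) (hμ1 : μ < 1)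
    (P ind : (Fin n → Bool) → ℝ)
    (hP : ∀ x, P x = ∏ i, (if x i then α else 1 - α))
    (hind : ∀ x, ind x =
      if (1 - μ) * n * α ≤ ∑ i, (if x i then (1 : ℝ) else 0) then 1 else 0)
    (PE : ℝ) (hPE : PE = ∑ x, P x * ind x)
    (Pt : (Fin n → Bool) → ℝ)
    (hPt : ∀ x, Pt x = P x * ind x / PE)
    (chern : ∑ x : Fin n → Bool, (∏ i, (if x i then α else 1 - α)) *
      (if (1 - μ) * n * α ≤ ∑ i, (if x i then (1:ℝ) else 0) then 0 else 1)
      ≤ Real.exp (-(μ ^ 2 * n * α) / 2)) :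
    (∀ x, 0 ≤ Pt x) ∧ (∑ x, Pt x = 1) ∧ (∑ x, P x = 1) ∧ (∀ x, 0 ≤ P x) ∧
      (∑ x, |Pt x - P x| ≤ 2 * Real.exp (-(μ ^ 2 * n * α) / 2)) := by
  have hP0 : ∀ x, 0 ≤ P x := by
    intro x; rw [hP]
    exact Finset.prod_nonneg fun i _ => by split <;> linarith
  have hind01 : ∀ x, ind x = 0 ∨ ind x = 1 := by
    intro x; rw [hind]; split
    · right; rfl
    · left; rfl
  have hind0 : ∀ x, 0 ≤ ind x := by
    intro x; rcases hind01 x with h | h <;> rw [h] <;> norm_num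
  have hind1 : ∀ x, ind x ≤ 1 := by
    intro x; rcases hind01 x with h | h <;> rw [h] <;> norm_num
  have hsumP : ∑ x, P x = 1 := by
    rw [Finset.sum_congr rfl fun x _ => hP x]
    have := sum_prod_bool' n (fun b => if b then α else 1 - α)
    simp only [if_true, if_false] at this
    rw [this]
    norm_num
  have hPE1 : PE ≤ 1 := by
    rw [hPE, ← hsumP]
    apply Finset.sum_le_sum
    intro x _
    calc P x * ind x ≤ P x * 1 := mul_le_mul_of_nonneg_left (hind1 x) (hP0 x)
      _ = P x := mul_one _
  have hPEpos : 0 < PE := by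
    have hx0 : P (fun _ => true) * ind (fun _ => true) = α ^ n := by
      rw [hP, hind]
      have hS : ∑ i : Fin n, (if (fun _ : Fin n => true) i then (1:ℝ) else 0) = n := by
        simp
      rw [hS, if_pos (by nlinarith [Nat.cast_nonneg (α := ℝ) n, mul_pos hμ hα] : (1 - μ) * n * α ≤ (n : ℝ))]
      simp
    have h1 : P (fun _ => true) * ind (fun _ => true) ≤ PE := by
      rw [hPE]
      exact Finset.single_le_sum (fun x _ => mul_nonneg (hP0 x) (hind0 x))
        (Finset.mem_univ _)
    have : (0:ℝ) < α ^ n := pow_pos hα n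
    linarith [hx0 ▸ h1]
  have hPt0 : ∀ x, 0 ≤ Pt x := by
    intro x; rw [hPt]
    exact div_nonneg (mul_nonneg (hP0 x) (hind0 x)) (le_of_lt hPEpos)
  have hsumPt : ∑ x, Pt x = 1 := by
    rw [Finset.sum_congr rfl fun x _ => hPt x, ← Finset.sum_div, ← hPE,
      div_self (ne_of_gt hPEpos)]
  have hchern' : 1 - PE ≤ Real.exp (-(μ ^ 2 * n * α) / 2) := by
    have heq : ∑ x : Fin n → Bool, (∏ i, (if x i then α else 1 - α)) *
        (if (1 - μ) * n * α ≤ ∑ i, (if x i then (1:ℝ) else 0) then 0 else 1)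
        = ∑ x, (P x - P x * ind x) := by
      apply Finset.sum_congr rfl
      intro x _
      rw [hP, hind]
      split <;> ring
    rw [heq, Finset.sum_sub_distrib, hsumP, ← hPE] at chern
    exact chern
  refine ⟨hPt0, hsumPt, hsumP, hP0, ?_⟩
  have hpt : ∀ x, |Pt x - P x| = (Pt x - P x * ind x) + (P x - P x * ind x) := by
    intro x
    rcases hind01 x with h | h
    · rw [hPt, h, mul_zero, zero_div, zero_sub, abs_neg, abs_of_nonneg (hP0 x)]
      ring
    · have hge : P x ≤ Pt x := by
        rw [hPt, h, mul_one, le_div_iff₀ hPEpos]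
        nlinarith [hP0 x]
      rw [abs_of_nonneg (by linarith : 0 ≤ Pt x - P x), h, mul_one]
      ring
  rw [Finset.sum_congr rfl fun x _ => hpt x, Finset.sum_add_distrib,
    Finset.sum_sub_distrib, Finset.sum_sub_distrib, hsumPt, hsumP, ← hPE]
  linarith


lemma abs_mul_sub_le (a b c d : ℝ) (hb : 0 ≤ b) (hc : 0 ≤ c) :
    |a * b - c * d| ≤ |a - c| * b + c * |b - d| := by
  have h : a * b - c * d = (a - c) * b + c * (b - d) := by ring
  rw [h]
  calc |(a - c) * b + c * (b - d)| ≤ |(a - c) * b| + |c * (b - d)| := abs_add_le _ _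
    _ = |a - c| * b + c * |b - d| := by
        rw [abs_mul, abs_mul, abs_of_nonneg hb, abs_of_nonneg hc]

lemma stmt2_assembly
    (X : Type*) [Fintype X] (A : Type*) [Fintype A]
    (k : X × X → A → ℝ)
    (hk : ∀ s a, 0 ≤ k s a) (hk1 : ∀ s, ∑ a, k s a = 1)
    (P Q Pt Qt : X → ℝ)
    (hPt0 : ∀ x, 0 ≤ Pt x) (hQt0 : ∀ y, 0 ≤ Qt y)
    (hP0 : ∀ x, 0 ≤ P x) (hQ0 : ∀ y, 0 ≤ Q y)
    (hsumPt : ∑ x, Pt x = 1) (hsumQt : ∑ y, Qt y = 1)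
    (hsumP : ∑ x, P x = 1) (hsumQ : ∑ y, Q y = 1)
    (E1 E2 : ℝ) (hE1 : 0 ≤ E1) (hE2 : 0 ≤ E2)
    (hTVP : ∑ x, |Pt x - P x| ≤ 2 * E1) (hTVQ : ∑ y, |Qt y - Q y| ≤ 2 * E2)
    (μt μ0 : X × X → ℝ)
    (hμt : ∀ s, μt s = Pt s.1 * Qt s.2)
    (hμ0 : ∀ s, μ0 s = P s.1 * Q s.2)
    (μtk μ0k : A → ℝ)
    (hμtk : ∀ a, μtk a = ∑ s, μt s * k s a)
    (hμ0k : ∀ a, μ0k a = ∑ s, μ0 s * k s a) :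
    (1 / 2) * ∑ s, ∑ a, |μt s * μtk a - μ0 s * μ0k a| ≤ 4 * E1 + 4 * E2 := by
  have hμt0 : ∀ s, 0 ≤ μt s := fun s => by
    rw [hμt]; exact mul_nonneg (hPt0 _) (hQt0 _)
  have hμ00 : ∀ s, 0 ≤ μ0 s := fun s => by
    rw [hμ0]; exact mul_nonneg (hP0 _) (hQ0 _)
  have hsumμt : ∑ s, μt s = 1 := by
    rw [Finset.sum_congr rfl fun s _ => hμt s, Fintype.sum_prod_type]
    simp_rw [← Finset.mul_sum, hsumQt, mul_one, hsumPt]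
  have hsumμ0 : ∑ s, μ0 s = 1 := by
    rw [Finset.sum_congr rfl fun s _ => hμ0 s, Fintype.sum_prod_type]
    simp_rw [← Finset.mul_sum, hsumQ, mul_one, hsumP]
  have hμtk0 : ∀ a, 0 ≤ μtk a := fun a => by
    rw [hμtk]
    exact Finset.sum_nonneg fun s _ => mul_nonneg (hμt0 s) (hk s a)
  have hsumμtk : ∑ a, μtk a = 1 := by
    rw [Finset.sum_congr rfl fun a _ => hμtk a, Finset.sum_comm]
    simp_rw [← Finset.mul_sum, hk1, mul_one]
    exact hsumμt
  set D := ∑ s, |μt s - μ0 s| with hD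
  -- D ≤ 2E1 + 2E2
  have hDle : D ≤ 2 * E1 + 2 * E2 := by
    have step : D ≤ ∑ s : X × X, (|Pt s.1 - P s.1| * Qt s.2 + P s.1 * |Qt s.2 - Q s.2|) := by
      apply Finset.sum_le_sum
      intro s _
      rw [hμt, hμ0]
      exact abs_mul_sub_le _ _ _ _ (hQt0 _) (hP0 _)
    have factor : ∑ s : X × X, (|Pt s.1 - P s.1| * Qt s.2 + P s.1 * |Qt s.2 - Q s.2|)
        = (∑ x, |Pt x - P x|) * (∑ y, Qt y) + (∑ x, P x) * (∑ y, |Qt y - Q y|) := by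
      rw [Fintype.sum_prod_type, Finset.sum_mul_sum, Finset.sum_mul_sum,
        ← Finset.sum_add_distrib]
      apply Finset.sum_congr rfl
      intro x _
      rw [Finset.sum_add_distrib]
    rw [factor, hsumQt, hsumP, mul_one, one_mul] at step
    linarith
  -- Dk ≤ D
  have hDk : ∑ a, |μtk a - μ0k a| ≤ D := by
    have step : ∀ a, |μtk a - μ0k a| ≤ ∑ s, |μt s - μ0 s| * k s a := by
      intro a
      rw [hμtk, hμ0k, ← Finset.sum_sub_distrib]
      calc |∑ s, (μt s * k s a - μ0 s * k s a)|
          ≤ ∑ s, |μt s * k s a - μ0 s * k s a| := Finset.abs_sum_le_sum_abs _ _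
        _ = ∑ s, |μt s - μ0 s| * k s a := by
            apply Finset.sum_congr rfl
            intro s _
            rw [← sub_mul, abs_mul, abs_of_nonneg (hk s a)]
    calc ∑ a, |μtk a - μ0k a| ≤ ∑ a, ∑ s, |μt s - μ0 s| * k s a :=
          Finset.sum_le_sum fun a _ => step a
      _ = ∑ s, |μt s - μ0 s| * (∑ a, k s a) := by
          rw [Finset.sum_comm]
          simp_rw [← Finset.mul_sum]
      _ = D := by simp_rw [hk1, mul_one]; rfl
  -- final
  have final : ∑ s, ∑ a, |μt s * μtk a - μ0 s * μ0k a| ≤ 2 * D := by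
    have step : ∑ s, ∑ a, |μt s * μtk a - μ0 s * μ0k a|
        ≤ ∑ s, ∑ a, (|μt s - μ0 s| * μtk a + μ0 s * |μtk a - μ0k a|) := by
      apply Finset.sum_le_sum; intro s _
      apply Finset.sum_le_sum; intro a _
      exact abs_mul_sub_le _ _ _ _ (hμtk0 a) (hμ00 s)
    have factor : ∑ s, ∑ a, (|μt s - μ0 s| * μtk a + μ0 s * |μtk a - μ0k a|)
        = D * (∑ a, μtk a) + (∑ s, μ0 s) * (∑ a, |μtk a - μ0k a|) := by
      calc ∑ s, ∑ a, (|μt s - μ0 s| * μtk a + μ0 s * |μtk a - μ0k a|)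
          = ∑ s, (|μt s - μ0 s| * (∑ a, μtk a) + μ0 s * (∑ a, |μtk a - μ0k a|)) := by
            apply Finset.sum_congr rfl
            intro s _
            rw [Finset.sum_add_distrib, ← Finset.mul_sum, ← Finset.mul_sum]
        _ = D * (∑ a, μtk a) + (∑ s, μ0 s) * (∑ a, |μtk a - μ0k a|) := by
            rw [Finset.sum_add_distrib, ← Finset.sum_mul, ← Finset.sum_mul]
    rw [factor, hsumμtk, hsumμ0, mul_one, one_mul] at step
    linarith
  linarith

/-- product-state bound of Lemma 4 of the paper, classical
content. Let `μt = Pt ⊗ Qt` be the product of the truncated Bernoulli-product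
distributions and `μ0 = P ⊗ Q` the untruncated product, and let `k` be a
probability kernel from `{0,1}^n × {0,1}^n` to a finite set `A`. Then the ℓ¹
distance (halved) between `μt ⊗ (μt ∘ k)` and `μ0 ⊗ (μ0 ∘ k)` is at most
`4·exp(-μ²·n·α/2) + 4·exp(-μ²·n·β/2)`. -/
theorem stmt_2 (n : ℕ) (hn : 0 < n) (α β μ : ℝ)
    (hα : 0 < α) (hα1 : α < 1) (hβ : 0 < β) (hβ1 : β < 1)
    (hμ : 0 < μ) (hμ1 : μ < 1)
    (A : Type*) [Fintype A]
    (k : (Fin n → Bool) × (Fin n → Bool) → A → ℝ)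
    (hk : ∀ s a, 0 ≤ k s a) (hk1 : ∀ s, ∑ a, k s a = 1)
    (P Q : (Fin n → Bool) → ℝ)
    (hP : ∀ x, P x = ∏ i, (if x i then α else 1 - α))
    (hQ : ∀ y, Q y = ∏ i, (if y i then β else 1 - β))
    (indX indY : (Fin n → Bool) → ℝ)
    (hindX : ∀ x, indX x =
      if (1 - μ) * n * α ≤ ∑ i, (if x i then (1 : ℝ) else 0) then 1 else 0)
    (hindY : ∀ y, indY y =
      if (1 - μ) * n * β ≤ ∑ i, (if y i then (1 : ℝ) else 0) then 1 else 0)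
    (PE QE : ℝ) (hPE : PE = ∑ x, P x * indX x) (hQE : QE = ∑ y, Q y * indY y)
    (Pt Qt : (Fin n → Bool) → ℝ)
    (hPt : ∀ x, Pt x = P x * indX x / PE)
    (hQt : ∀ y, Qt y = Q y * indY y / QE)
    (μt μ0 : (Fin n → Bool) × (Fin n → Bool) → ℝ)
    (hμt : ∀ s, μt s = Pt s.1 * Qt s.2)
    (hμ0 : ∀ s, μ0 s = P s.1 * Q s.2)
    (μtk μ0k : A → ℝ)
    (hμtk : ∀ a, μtk a = ∑ s, μt s * k s a)
    (hμ0k : ∀ a, μ0k a = ∑ s, μ0 s * k s a) :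
    (1 / 2) * ∑ s, ∑ a, |μt s * μtk a - μ0 s * μ0k a| ≤
      4 * Real.exp (-(μ ^ 2 * n * α) / 2) + 4 * Real.exp (-(μ ^ 2 * n * β) / 2) := by

  have chP := chernoff n α μ hα hα1 hμ hμ1
  have chQ := chernoff n β μ hβ hβ1 hμ hμ1
  obtain ⟨hPt0, hsumPt, hsumP, hP0, hTVP⟩ :=
    tv_trunc n α μ hα hα1 hμ hμ1 P indX hP hindX PE hPE Pt hPt chP
  obtain ⟨hQt0, hsumQt, hsumQ, hQ0, hTVQ⟩ :=
    tv_trunc n β μ hβ hβ1 hμ hμ1 Q indY hQ hindY QE hQE Qt hQt chQ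
  exact stmt2_assembly (Fin n → Bool) A k hk hk1 P Q Pt Qt hPt0 hQt0 hP0 hQ0
    hsumPt hsumQt hsumP hsumQ
    (Real.exp (-(μ ^ 2 * n * α) / 2)) (Real.exp (-(μ ^ 2 * n * β) / 2))
    (le_of_lt (Real.exp_pos _)) (le_of_lt (Real.exp_pos _))
    hTVP hTVQ μt μ0 hμt hμ0 μtk μ0k hμtk hμ0k
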